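/- Let 0 < α < 1, σ ∈ (0,1], and u : [0,T] → ℝ with |u'(s)| ≤ C(1 + s^{α-1}) for s ∈ (0, t_1]. Define t_1^* = σ t_1 (with t_0 = 0) and u^{1,*} = σ u(t_1) + (1-σ) u(0). Then |u(t_1^*) - u^{1,*}| ≤ C' τ_1^2 t_1^{α-2} where τ_1 = t_1 and C' depends only on C, α, σ, T. -/

import Mathlib

/-! With `G t = C t + (C/α) t^α`, whose derivative `C (1 + t^(α-1))` dominates `|u'|` on
`(0, t₁)`, both `G - u` and `G + u` are monotone, so `|u y - u x| ≤ G y - G x` for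
`0 ≤ x ≤ y ≤ t₁`. The interpolation error at `σ t₁` is a convex combination of the increments of
`u` over `[0, σ t₁]` and `[σ t₁, t₁]`, hence at most `G t₁ - G 0 = C t₁ + (C/α) t₁^α`, and
`t₁ ≤ T^(1-α) t₁^α` because `1 - α ≥ 0`. -/

open Real Set

theorem abs_sub_le_sub_of_abs_deriv_le {f f' G G' : ℝ → ℝ} {a b : ℝ}
    (hf : ContinuousOn f (Icc a b)) (hG : ContinuousOn G (Icc a b))
    (hf' : ∀ x ∈ Ioo a b, HasDerivAt f (f' x) x) (hG' : ∀ x ∈ Ioo a b, HasDerivAt G (G' x) x)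
    (bound : ∀ x ∈ Ioo a b, |f' x| ≤ G' x) ⦃x y : ℝ⦄ (hx : x ∈ Icc a b) (hy : y ∈ Icc a b)
    (hxy : x ≤ y) : |f y - f x| ≤ G y - G x := by
  have hsub : MonotoneOn (G - f) (Icc a b) :=
    monotoneOn_of_hasDerivWithinAt_nonneg (convex_Icc a b) (hG.sub hf)
      (fun z hz ↦ by rw [interior_Icc] at hz ⊢; exact ((hG' z hz).sub (hf' z hz)).hasDerivWithinAt)
      (fun z hz ↦ by
        rw [interior_Icc] at hz
        linarith [le_abs_self (f' z), bound z hz])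
  have hadd : MonotoneOn (G + f) (Icc a b) :=
    monotoneOn_of_hasDerivWithinAt_nonneg (convex_Icc a b) (hG.add hf)
      (fun z hz ↦ by rw [interior_Icc] at hz ⊢; exact ((hG' z hz).add (hf' z hz)).hasDerivWithinAt)
      (fun z hz ↦ by
        rw [interior_Icc] at hz
        linarith [neg_abs_le (f' z), bound z hz])
  have h₁ := hsub hx hy hxy
  have h₂ := hadd hx hy hxy
  simp only [Pi.sub_apply, Pi.add_apply] at h₁ h₂
  exact abs_sub_le_iff.2 ⟨by linarith, by linarith⟩

theorem abs_sub_convex_comb_le_of_abs_sub_le {f G : ℝ → ℝ} {a b c σ : ℝ} (hσ₀ : 0 ≤ σ)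
    (hσ₁ : σ ≤ 1) (hac : |f c - f a| ≤ G c - G a) (hcb : |f b - f c| ≤ G b - G c) :
    |f c - (σ * f b + (1 - σ) * f a)| ≤ G b - G a := by
  rw [abs_le] at hac hcb ⊢
  constructor <;> nlinarith

theorem hasDerivAt_mul_add_div_mul_rpow (C : ℝ) {α x : ℝ} (hα : α ≠ 0) (hx : x ≠ 0) :
    HasDerivAt (fun t ↦ C * t + C / α * t ^ α) (C * (1 + x ^ (α - 1))) x := by
  refine (((hasDerivAt_id x).const_mul C).add
    ((hasDerivAt_rpow_const (p := α) (Or.inl hx)).const_mul (C / α))).congr_deriv ?_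
  field_simp

theorem self_le_rpow_one_sub_mul_rpow {α t T : ℝ} (hα : α ≤ 1) (ht : 0 < t) (htT : t ≤ T) :
    t ≤ T ^ (1 - α) * t ^ α :=
  calc t = t ^ (1 - α) * t ^ α := by rw [← rpow_add ht, sub_add_cancel, rpow_one]
    _ ≤ T ^ (1 - α) * t ^ α := by gcongr

theorem first_step_interpolation_bound (C α σ T : ℝ) (hC : 0 < C)
    (hα0 : 0 < α) (hα1 : α < 1) (hσ0 : 0 < σ) (hσ1 : σ ≤ 1) (hT : 0 < T) :
    ∃ C' : ℝ, 0 < C' ∧ ∀ (u u' : ℝ → ℝ) (t₁ : ℝ), 0 < t₁ → t₁ ≤ T →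
      ContinuousOn u (Set.Icc 0 T) →
      (∀ s ∈ Set.Ioc (0:ℝ) t₁, HasDerivAt u (u' s) s) →
      (∀ s ∈ Set.Ioc (0:ℝ) t₁, |u' s| ≤ C * (1 + s ^ (α - 1))) →
      |u (σ * t₁) - (σ * u t₁ + (1 - σ) * u 0)| ≤ C' * t₁ ^ 2 * t₁ ^ (α - 2) := by
  refine ⟨C * T ^ (1 - α) + C / α, by positivity, ?_⟩
  intro u u' t₁ ht₁ ht₁T hu hu' hbound
  set G : ℝ → ℝ := fun t ↦ C * t + C / α * t ^ α
  have hGcont : ContinuousOn G (Icc 0 t₁) :=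
    ((continuous_const.mul continuous_id).add
      (continuous_const.mul (continuous_rpow_const hα0.le))).continuousOn
  have hincr := abs_sub_le_sub_of_abs_deriv_le (hu.mono (Icc_subset_Icc le_rfl ht₁T)) hGcont
    (fun s hs ↦ hu' s (Ioo_subset_Ioc_self hs))
    (fun s hs ↦ hasDerivAt_mul_add_div_mul_rpow C hα0.ne' hs.1.ne')
    (fun s hs ↦ hbound s (Ioo_subset_Ioc_self hs))
  have hσt : σ * t₁ ∈ Icc 0 t₁ := ⟨by positivity, mul_le_of_le_one_left ht₁.le hσ1⟩
  calc |u (σ * t₁) - (σ * u t₁ + (1 - σ) * u 0)| ≤ G t₁ - G 0 :=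
        abs_sub_convex_comb_le_of_abs_sub_le hσ0.le hσ1
          (hincr (left_mem_Icc.2 ht₁.le) hσt hσt.1) (hincr hσt (right_mem_Icc.2 ht₁.le) hσt.2)
    _ = C * t₁ + C / α * t₁ ^ α := by simp [G, zero_rpow hα0.ne']
    _ ≤ C * (T ^ (1 - α) * t₁ ^ α) + C / α * t₁ ^ α := by
        gcongr; exact self_le_rpow_one_sub_mul_rpow hα1.le ht₁ ht₁T
    _ = (C * T ^ (1 - α) + C / α) * t₁ ^ 2 * t₁ ^ (α - 2) := by
        rw [mul_assoc _ (t₁ ^ 2), ← rpow_natCast, ← rpow_add ht₁]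
        ring_nf
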